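/- The expected number of iterations for SEMO on LOTZ to obtain a first Pareto-optimal search point in the population is O(n²). If, after the Pareto front is reached, every parent selection selects a good individual with probability at least p_good whenever the population does not cover the whole Pareto front, then the expected number of iterations until the population covers the whole Pareto front is at most O(n²/p_good). -/

import Mathlib

noncomputable section
open scoped ENNReal
attribute [local instance] Classical.propDecidable

namespace EMO


/-- A bit string of length `n`. -/
abbrev BitString (n : ℕ) := Fin n → Bool

/-- Number of one-bits. -/
def onesCount {n : ℕ} (x : BitString n) : ℕ :=
  (Finset.univ.filter fun i => x i = true).card

def allOnes (n : ℕ) : BitString n := fun _ => true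
def allZeros (n : ℕ) : BitString n := fun _ => false

/-- The bi-objective function OneMinMax. -/
def OneMinMax {n : ℕ} (x : BitString n) : ℤ × ℤ :=
  ((onesCount x : ℤ), (n : ℤ) - (onesCount x : ℤ))

/-- Number of leading ones. -/
def leadingOnes {n : ℕ} (x : BitString n) : ℕ :=
  (Finset.univ.filter fun i : Fin n => ∀ j : Fin n, j ≤ i → x j = true).card

/-- Number of trailing zeros. -/
def trailingZeros {n : ℕ} (x : BitString n) : ℕ :=
  (Finset.univ.filter fun i : Fin n => ∀ j : Fin n, i ≤ j → x j = false).card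

/-- The bi-objective function LOTZ. -/
def LOTZ {n : ℕ} (x : BitString n) : ℤ × ℤ :=
  ((leadingOnes x : ℤ), (trailingZeros x : ℤ))

/-- `y` dominates `x` (maximisation). -/
def dominates {n : ℕ} (f : BitString n → ℤ × ℤ) (y x : BitString n) : Prop :=
  (f x).1 ≤ (f y).1 ∧ (f x).2 ≤ (f y).2 ∧ f x ≠ f y

/-- `y` weakly dominates `x` (maximisation). -/
def weaklyDominates {n : ℕ} (f : BitString n → ℤ × ℤ) (y x : BitString n) : Prop :=
  (f x).1 ≤ (f y).1 ∧ (f x).2 ≤ (f y).2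

/-- Pareto optimality. -/
def paretoOptimal {n : ℕ} (f : BitString n → ℤ × ℤ) (x : BitString n) : Prop :=
  ¬ ∃ y : BitString n, dominates f y x

/-- A population of mutually non-dominated points. -/
def mutuallyNonDominated {n : ℕ} (f : BitString n → ℤ × ℤ)
    (P : Finset (BitString n)) : Prop :=
  ∀ x ∈ P, ∀ y ∈ P, ¬ dominates f y x

/-- Flip bit `i` of `x`. -/
def flipBit {n : ℕ} (x : BitString n) (i : Fin n) : BitString n :=
  Function.update x i (!x i)

/-- `y` is a Hamming neighbour of `x`. -/
def hammingNeighbour {n : ℕ} (x y : BitString n) : Prop :=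
  ∃ i : Fin n, y = flipBit x i

/-- `x` is good relative to population `P`: it is Pareto optimal and has a Pareto-optimal
Hamming neighbour whose objective vector is not attained by any member of `P`. -/
def isGood {n : ℕ} (f : BitString n → ℤ × ℤ) (P : Finset (BitString n))
    (x : BitString n) : Prop :=
  paretoOptimal f x ∧
    ∃ y : BitString n, hammingNeighbour x y ∧ paretoOptimal f y ∧ ∀ z ∈ P, f z ≠ f y

/-- `x` is bad relative to population `P`. -/
def isBad {n : ℕ} (f : BitString n → ℤ × ℤ) (P : Finset (BitString n))
    (x : BitString n) : Prop :=
  paretoOptimal f x ∧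
    ¬ ∃ y : BitString n, hammingNeighbour x y ∧ paretoOptimal f y ∧ ∀ z ∈ P, f z ≠ f y

/-- `P` covers the whole Pareto front of `f`. -/
def coversFront {n : ℕ} (f : BitString n → ℤ × ℤ) (P : Finset (BitString n)) : Prop :=
  ∀ x : BitString n, paretoOptimal f x → ∃ z ∈ P, f z = f x

/-- The hypervolume contribution of `x` to `P` (for a population of mutually
non-dominated points, with reference point `r`). -/
def HVC {n : ℕ} (f : BitString n → ℤ × ℤ) (r : ℤ × ℤ) (x : BitString n)
    (P : Finset (BitString n)) : ℤ :=
  ((f x).1 - (((P.filter fun z => (f z).1 < (f x).1).image fun z => (f z).1).max.unbotD r.1)) *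
  ((f x).2 - (((P.filter fun z => (f z).2 < (f x).2).image fun z => (f z).2).max.unbotD r.2))

/-- Crowding distance of `x` in `P` with respect to a single objective `g`: infinite for the
boundary points, and otherwise the normalised difference between successor and predecessor. -/
def CDCobj {n : ℕ} (g : BitString n → ℤ) (x : BitString n)
    (P : Finset (BitString n)) : ℝ≥0∞ :=
  if (∀ z ∈ P, g x ≤ g z) ∨ (∀ z ∈ P, g z ≤ g x) then ⊤
  else
    (((((P.filter fun z => g x < g z).image g).min.untopD 0 -
        (((P.filter fun z => g z < g x).image g).max.unbotD 0)).toNat : ℝ≥0∞)) /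
      ((((P.image g).max.unbotD 0 - ((P.image g).min.untopD 0)).toNat : ℝ≥0∞))

/-- The crowding distance contribution of `x` to `P`. -/
def CDC {n : ℕ} (f : BitString n → ℤ × ℤ) (x : BitString n)
    (P : Finset (BitString n)) : ℝ≥0∞ :=
  CDCobj (fun z => (f z).1) x P + CDCobj (fun z => (f z).2) x P

/-- A diversity measure `c` is diversity-favouring on `S`. -/
def diversityFavouring {n : ℕ} {α : Type*} [Preorder α] (f : BitString n → ℤ × ℤ)
    (c : BitString n → Finset (BitString n) → α) (S : Set (BitString n)) : Prop :=
  ∀ P : Finset (BitString n), mutuallyNonDominated f P →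
    ∀ x ∈ P, ∀ y ∈ P, x ∈ S → y ∈ S → isBad f P x → isGood f P y → c x P < c y P

/-- The default bit string (used only to make selection kernels total). -/
def defaultBS (n : ℕ) : BitString n := fun _ => false

/-- Local mutation: flip a single uniformly random bit. -/
def localMutation {n : ℕ} (hn : 0 < n) (x : BitString n) : PMF (BitString n) :=
  haveI : Nonempty (Fin n) := ⟨⟨0, hn⟩⟩
  (PMF.uniformOfFintype (Fin n)).map (flipBit x)

/-- A Bernoulli coin with success probability `1/n` (for `n ≥ 1`). -/
def bitFlipCoin (n : ℕ) : PMF Bool :=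
  PMF.bernoulli (min ((n : ℝ≥0∞))⁻¹ 1).toNNReal
    ((ENNReal.toNNReal_mono ENNReal.one_ne_top (min_le_right _ _)).trans_eq ENNReal.toNNReal_one)

/-- Global (standard bit) mutation: flip each bit independently with probability `1/n`. -/
def globalMutationAux {n : ℕ} : List (Fin n) → BitString n → PMF (BitString n)
  | [], x => PMF.pure x
  | i :: is, x => (bitFlipCoin n).bind fun b =>
      globalMutationAux is (if b then flipBit x i else x)

def globalMutation {n : ℕ} (x : BitString n) : PMF (BitString n) :=
  globalMutationAux (List.finRange n) x

/-- Survival selection: if `s'` is not dominated by any member of `P`, add `s'` to `P` and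
remove all members weakly dominated by `s'`. -/
def updatePop {n : ℕ} (f : BitString n → ℤ × ℤ) (P : Finset (BitString n))
    (s' : BitString n) : Finset (BitString n) :=
  if ∃ z ∈ P, dominates f z s' then P
  else insert s' (P.filter fun z => ¬ weaklyDominates f s' z)

/-- One iteration of (G)SEMO with parent-selection kernel `select` and mutation `mutate`. -/
def step {n : ℕ} (f : BitString n → ℤ × ℤ)
    (select : Finset (BitString n) → PMF (BitString n))
    (mutate : BitString n → PMF (BitString n))
    (P : Finset (BitString n)) : PMF (Finset (BitString n)) :=
  (select P).bind fun s => (mutate s).map fun s' => updatePop f P s'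

/-- The L-dominant attribute `L(x) = LO(x) + TZ(x)`. -/
def Ldom {n : ℕ} (x : BitString n) : ℕ := leadingOnes x + trailingZeros x

/-- The subpopulation of points with maximum L-dominant attribute. -/
def maxLSub {n : ℕ} (P : Finset (BitString n)) : Finset (BitString n) :=
  P.filter fun x => ∀ z ∈ P, Ldom z ≤ Ldom x

/-- One iteration of the modified GSEMO: parent selection (and the diversity contribution)
is restricted to the subpopulation of points with maximum L-dominant attribute. -/
def stepMod {n : ℕ} (f : BitString n → ℤ × ℤ)
    (select : Finset (BitString n) → PMF (BitString n))
    (mutate : BitString n → PMF (BitString n))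
    (P : Finset (BitString n)) : PMF (Finset (BitString n)) :=
  (select (maxLSub P)).bind fun s => (mutate s).map fun s' => updatePop f P s'

/-- Initial population: a single uniformly random bit string. -/
def initDist (n : ℕ) : PMF (Finset (BitString n)) :=
  (PMF.uniformOfFintype (BitString n)).map fun x => {x}

/-- Distribution of the population after `t` iterations. -/
def stateDist {S : Type*} (init : PMF S) (st : S → PMF S) : ℕ → PMF S
  | 0 => init
  | t + 1 => (stateDist init st t).bind st

/-- Expected number of iterations until an (absorbing) goal predicate is reached,
expressed as `∑ₜ Pr[goal not yet reached at time t]`. -/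
def expectedRuntime {S : Type*} (init : PMF S) (st : S → PMF S) (goal : S → Prop) : ℝ≥0∞ :=
  ∑' t : ℕ, (stateDist init st t).toOuterMeasure {s | ¬ goal s}

/-- Uniform parent selection. -/
def uniformSelect {n : ℕ} (P : Finset (BitString n)) : PMF (BitString n) :=
  if h : P.Nonempty then PMF.uniformOfFinset P h else PMF.pure (defaultBS n)

/-- Highest Diversity Contribution (HDC) parent selection: select an individual with
maximum diversity contribution, ties broken uniformly at random. -/
def HDCSelect {n : ℕ} {α : Type*} [LinearOrder α]
    (c : BitString n → Finset (BitString n) → α)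
    (P : Finset (BitString n)) : PMF (BitString n) :=
  if h : P.Nonempty then
    PMF.uniformOfFinset (P.filter fun x => ∀ y ∈ P, c y P ≤ c x P)
      (by
        obtain ⟨b, hb, hmax⟩ := P.exists_max_image (fun x => c x P) h
        exact ⟨b, Finset.mem_filter.mpr ⟨hb, hmax⟩⟩)
  else PMF.pure (defaultBS n)

/-- Non-Minimum Uniform at Random (NMUAR) parent selection: select uniformly at random
among all individuals whose diversity contribution is not minimal (from the whole
population if all contributions are equal). -/
def NMUARSelect {n : ℕ} {α : Type*} [LinearOrder α]
    (c : BitString n → Finset (BitString n) → α)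
    (P : Finset (BitString n)) : PMF (BitString n) :=
  if h : P.Nonempty then
    if hQ : (P.filter fun x => ∃ y ∈ P, c y P < c x P).Nonempty then
      PMF.uniformOfFinset _ hQ
    else PMF.uniformOfFinset P h
  else PMF.pure (defaultBS n)

/-- Tournament selection with tournament size `μ = |P|`: draw `μ` individuals uniformly at
random with replacement from `P` and select one with the highest diversity contribution
among the drawn multiset (ties broken uniformly at random). -/
def tournamentSelect {n : ℕ} {α : Type*} [LinearOrder α]
    (c : BitString n → Finset (BitString n) → α)
    (P : Finset (BitString n)) : PMF (BitString n) :=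
  if h : P.Nonempty then
    haveI : Nonempty {x // x ∈ P} := h.to_subtype
    (PMF.uniformOfFintype (Fin P.card → {x // x ∈ P})).bind fun g =>
      PMF.uniformOfFinset
        ((Finset.univ.image fun i => ((g i : {x // x ∈ P}) : BitString n)).filter fun x =>
          ∀ y ∈ Finset.univ.image fun i => ((g i : {x // x ∈ P}) : BitString n), c y P ≤ c x P)
        (by
          have hne : (Finset.univ.image fun i => ((g i : {x // x ∈ P}) : BitString n)).Nonempty := by
            refine ⟨(g ⟨0, Finset.card_pos.mpr h⟩ : {x // x ∈ P}), ?_⟩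
            exact Finset.mem_image.mpr ⟨⟨0, Finset.card_pos.mpr h⟩, Finset.mem_univ _, rfl⟩
          obtain ⟨b, hb, hmax⟩ :=
            Finset.exists_max_image _ (fun x => c x P) hne
          exact ⟨b, Finset.mem_filter.mpr ⟨hb, hmax⟩⟩)
  else PMF.pure (defaultBS n)

/-- Exponential ranking scheme: probability of selecting the `i`-th ranked individual
(1-indexed) in a population of size `μ`. -/
def rExp (i μ : ℕ) : ℝ≥0∞ :=
  (2 : ℝ≥0∞)⁻¹ ^ i / ∑ j ∈ Finset.Icc 1 μ, (2 : ℝ≥0∞)⁻¹ ^ j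

/-- Power-law ranking scheme. -/
def rPow (i μ : ℕ) : ℝ≥0∞ :=
  ((i : ℝ≥0∞) ^ 2)⁻¹ / ∑ j ∈ Finset.Icc 1 μ, ((j : ℝ≥0∞) ^ 2)⁻¹

/-- Harmonic ranking scheme. -/
def rHarm (i μ : ℕ) : ℝ≥0∞ :=
  (i : ℝ≥0∞)⁻¹ / ∑ j ∈ Finset.Icc 1 μ, (j : ℝ≥0∞)⁻¹


/-- `select` implements a rank-based parent-selection scheme with rank probabilities
`r i μ` (1-indexed rank `i`, population size `μ`) with respect to the diversity
contribution `c`, for some non-increasing ordering of the population by `c`. -/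
def implementsRankScheme {n : ℕ} {α : Type*} [Preorder α]
    (c : BitString n → Finset (BitString n) → α) (r : ℕ → ℕ → ℝ≥0∞)
    (select : Finset (BitString n) → PMF (BitString n)) : Prop :=
  ∀ P : Finset (BitString n), P.Nonempty →
    ∃ l : List (BitString n), l.Nodup ∧ l.toFinset = P ∧
      l.Chain' (fun a b => c b P ≤ c a P) ∧
      (∀ i : Fin l.length, select P (l.get i) = r (i.val + 1) P.card) ∧
      (∀ x : BitString n, x ∉ P → select P x = 0)

/-- The Pareto-optimal point `1^i 0^(n-i)` of LOTZ. -/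
def opt (n i : ℕ) : BitString n := fun t => decide ((t : ℕ) < i)

/-- The whole Pareto set of LOTZ as a population. -/
def frontSet (n : ℕ) : Finset (BitString n) := (Finset.range (n + 1)).image (opt n)

/-- `P` has a gap at position `i`. -/
def hasGapAt {n : ℕ} (P : Finset (BitString n)) (i : ℕ) : Prop :=
  opt n i ∉ P ∧ (∃ j, j < i ∧ opt n j ∈ P) ∧ (∃ k, i < k ∧ k ≤ n ∧ opt n k ∈ P)

/-- `P` has a gap at some position `i` with `n/4 ≤ i ≤ 3n/4`. -/
def gapInRange (n : ℕ) (P : Finset (BitString n)) : Prop :=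
  ∃ i : ℕ, n ≤ 4 * i ∧ 4 * i ≤ 3 * n ∧ hasGapAt P i

/-- `P` contains both `0^n` and `1^n`. -/
def bothExtremes (n : ℕ) (P : Finset (BitString n)) : Prop :=
  allZeros n ∈ P ∧ allOnes n ∈ P

/-- The chain stopped (frozen) as soon as `cond` holds. -/
def stopWhen {S : Type*} (cond : S → Prop) (st : S → PMF S) (s : S) : PMF S :=
  if cond s then PMF.pure s else st s

/-!
While the population holds no Pareto-optimal point it is a single string `x` (a one-bit flip
of a non-optimal string is comparable with it), and flipping the first zero of `x` raises
`LO x + TZ x`; this happens with probability at least `1/n` and at most `n` times. Once a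
Pareto-optimal point is present, a good parent followed by the right bit flip adds a new
Pareto-optimal point, with probability at least `p/n`, at most `n + 1` times. So the potential
`(n - max L) + (n + 1 - #Pareto-optimal members)` never increases and drops with probability at
least `p/n` until the goal is reached, and the drift bound gives expected time `(2n + 1) n / p`.
-/

section Drift

variable {α β S : Type*}

theorem _root_.PMF.tsum_bind_apply_mul (p : PMF α) (k : α → PMF β) (g : β → ℝ≥0∞) :
    ∑' b, p.bind k b * g b = ∑' a, p a * ∑' b, k a b * g b := by
  simp only [PMF.bind_apply, ← ENNReal.tsum_mul_right, ← ENNReal.tsum_mul_left, mul_assoc]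
  exact ENNReal.tsum_comm

theorem _root_.PMF.tsum_mul_add_le (q : PMF α) (g : α → ℕ) {G : ℕ} {s : ℝ≥0∞}
    (hle : ∀ a ∈ q.support, g a ≤ G) (hdrop : s ≤ q.toOuterMeasure {a | g a < G}) :
    ∑' a, q a * g a + s ≤ G := by
  rw [PMF.toOuterMeasure_apply] at hdrop
  calc ∑' a, q a * g a + s
      ≤ ∑' a, (q a * g a + {a | g a < G}.indicator q a) := by
        rw [ENNReal.tsum_add]
        gcongr
    _ ≤ ∑' a, q a * G := by
        refine ENNReal.tsum_le_tsum fun a => ?_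
        by_cases hq : q a = 0
        · simp [hq]
        rw [Set.indicator_apply]
        split_ifs with hlt
        · calc q a * g a + q a = q a * (g a + 1 : ℕ) := by push_cast; ring
            _ ≤ q a * G := by gcongr; exact hlt
        · rw [add_zero]
          gcongr
          exact hle a hq
    _ = G := by rw [ENNReal.tsum_mul_right, q.tsum_coe, one_mul]

lemma forall_mem_support_stateDist {init : PMF S} {st : S → PMF S} {I : S → Prop}
    (hinit : ∀ x ∈ init.support, I x) (hinv : ∀ x, I x → ∀ y ∈ (st x).support, I y) :
    ∀ t, ∀ x ∈ (stateDist init st t).support, I x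
  | 0 => hinit
  | t + 1 => fun y hy => by
    obtain ⟨x, hx, hy⟩ := (PMF.mem_support_bind_iff _ _ _).mp hy
    exact hinv x (forall_mem_support_stateDist hinit hinv t x hx) y hy

/-- Before the goal is reached the expected potential drops by at least `s` per step, so the
sum over time telescopes to at most the initial expected potential. -/
theorem mul_expectedRuntime_le_of_potential (init : PMF S) (st : S → PMF S) (goal : S → Prop)
    (I : S → Prop) (g : S → ℕ) {M : ℕ} {s : ℝ≥0∞}
    (hinit : ∀ x ∈ init.support, I x ∧ g x ≤ M)
    (hinv : ∀ x, I x → ∀ y ∈ (st x).support, I y ∧ g y ≤ g x)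
    (hdrop : ∀ x, I x → ¬ goal x → s ≤ (st x).toOuterMeasure {y | g y < g x}) :
    s * expectedRuntime init st goal ≤ M := by
  set μ := stateDist init st
  have hI := forall_mem_support_stateDist (fun x hx => (hinit x hx).1)
    fun x hx y hy => (hinv x hx y hy).1
  set A : ℕ → ℝ≥0∞ := fun t => ∑' x, μ t x * g x
  set B : ℕ → ℝ≥0∞ := fun t => (μ t).toOuterMeasure {x | ¬ goal x}
  have hstep : ∀ t, A (t + 1) + s * B t ≤ A t := by
    intro t
    simp only [A, B, PMF.toOuterMeasure_apply, ← ENNReal.tsum_mul_left]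
    rw [show μ (t + 1) = (μ t).bind st from rfl, PMF.tsum_bind_apply_mul, ← ENNReal.tsum_add]
    refine ENNReal.tsum_le_tsum fun x => ?_
    by_cases hx : μ t x = 0
    · simp [hx]
    have hle := fun y hy => (hinv x (hI t x hx) y hy).2
    rw [Set.indicator_apply]
    split_ifs with hg
    · rw [mul_comm s, ← mul_add]
      exact mul_le_mul_right (PMF.tsum_mul_add_le _ _ hle (hdrop x (hI t x hx) hg)) _
    · rw [mul_zero, add_zero, ← add_zero (∑' y, _)]
      exact mul_le_mul_right (PMF.tsum_mul_add_le _ _ hle zero_le) _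
  have hA0 : A 0 ≤ M := by
    rw [← add_zero (A 0)]
    exact PMF.tsum_mul_add_le init g (fun x hx => (hinit x hx).2) zero_le
  have hsum : ∀ T, ∑ t ∈ Finset.range T, s * B t + A T ≤ M := by
    intro T
    induction T with
    | zero => simpa using hA0
    | succ T ih =>
      calc ∑ t ∈ Finset.range (T + 1), s * B t + A (T + 1)
          = ∑ t ∈ Finset.range T, s * B t + (A (T + 1) + s * B T) := by
            rw [Finset.sum_range_succ]; ring
        _ ≤ M := le_trans (by gcongr; exact hstep T) ih
  rw [expectedRuntime, ← ENNReal.tsum_mul_left]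
  exact ENNReal.tsum_le_of_sum_range_le fun T => le_trans le_self_add (hsum T)

end Drift

section UpdatePop

variable {n : ℕ} {f : BitString n → ℤ × ℤ} {P : Finset (BitString n)} {x y : BitString n}

lemma updatePop_nonempty (hP : P.Nonempty) (y : BitString n) : (updatePop f P y).Nonempty := by
  unfold updatePop
  split_ifs
  exacts [hP, Finset.insert_nonempty _ _]

lemma mem_updatePop_self (h : ¬ ∃ z ∈ P, dominates f z y) : y ∈ updatePop f P y := by
  rw [updatePop, if_neg h]
  exact Finset.mem_insert_self _ _

lemma mutuallyNonDominated_singleton (x : BitString n) : mutuallyNonDominated f {x} := by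
  intro a ha b hb ⟨_, _, hne⟩
  rw [Finset.mem_singleton] at ha hb
  exact hne (by rw [ha, hb])

lemma mutuallyNonDominated_updatePop (hP : mutuallyNonDominated f P) (y : BitString n) :
    mutuallyNonDominated f (updatePop f P y) := by
  unfold updatePop
  split_ifs with hdom
  · exact hP
  intro a ha b hb
  rcases Finset.mem_insert.mp ha with rfl | ha <;> rcases Finset.mem_insert.mp hb with rfl | hb
  · exact fun ⟨_, _, hne⟩ => hne rfl
  · exact fun hd => hdom ⟨b, (Finset.mem_filter.mp hb).1, hd⟩
  · exact fun hd => (Finset.mem_filter.mp ha).2 ⟨hd.1, hd.2.1⟩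
  · exact hP a (Finset.mem_filter.mp ha).1 b (Finset.mem_filter.mp hb).1

lemma not_dominates_of_weaklyDominates (h : weaklyDominates f y x) : ¬ dominates f x y :=
  fun ⟨h1, h2, hne⟩ => hne (Prod.ext (le_antisymm h1 h.1) (le_antisymm h2 h.2))

lemma updatePop_singleton_of_weaklyDominates (h : weaklyDominates f y x) :
    updatePop f {x} y = {y} := by
  rw [updatePop, if_neg (by simpa using not_dominates_of_weaklyDominates h),
    Finset.filter_singleton, if_neg (not_not_intro h)]
  rfl

lemma updatePop_singleton_eq_or (h : weaklyDominates f x y ∨ weaklyDominates f y x) :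
    updatePop f {x} y = {x} ∨ updatePop f {x} y = {y} := by
  by_cases hd : dominates f x y
  · exact Or.inl (by rw [updatePop, if_pos ⟨x, Finset.mem_singleton_self x, hd⟩])
  refine Or.inr (updatePop_singleton_of_weaklyDominates (h.elim (fun hxy => ?_) id))
  have heq : f y = f x := not_not.mp fun hne => hd ⟨hxy.1, hxy.2, hne⟩
  exact ⟨heq ▸ le_rfl, heq ▸ le_rfl⟩

end UpdatePop

section BitString

variable {n : ℕ} {x : BitString n}

lemma flipBit_apply_self (x : BitString n) (i : Fin n) : flipBit x i i = !x i :=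
  Function.update_self ..

lemma flipBit_apply_of_ne (x : BitString n) {i j : Fin n} (h : j ≠ i) : flipBit x i j = x j :=
  Function.update_of_ne h ..

lemma lt_leadingOnes_iff (j : Fin n) : (j : ℕ) < leadingOnes x ↔ ∀ k ≤ j, x k = true :=
  Fin.lt_card_filter_univ_iff_apply_of_imp _ fun _ _ hji h k hk => h k (hk.trans hji)

lemma trailingZeros_eq_leadingOnes_rev (x : BitString n) :
    trailingZeros x = leadingOnes fun i => !x i.rev := by
  refine Finset.card_nbij' Fin.rev Fin.rev ?_ ?_ (fun _ _ => Fin.rev_rev _)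
    (fun _ _ => Fin.rev_rev _)
  · intro i hi
    simp only [Finset.coe_filter, Finset.mem_univ, true_and, Set.mem_ofPred_eq] at hi ⊢
    intro j hj
    simpa using hi j.rev (Fin.le_rev_iff.mpr hj)
  · intro i hi
    simp only [Finset.coe_filter, Finset.mem_univ, true_and, Set.mem_ofPred_eq] at hi ⊢
    intro j hj
    simpa using hi j.rev (Fin.rev_le_iff.mp hj)

lemma lt_trailingZeros_iff (j : Fin n) :
    (j.rev : ℕ) < trailingZeros x ↔ ∀ k, j ≤ k → x k = false := by
  rw [trailingZeros_eq_leadingOnes_rev, lt_leadingOnes_iff]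
  refine ⟨fun h k hk => by simpa using h k.rev (Fin.rev_le_rev.mpr hk), fun h k hk => ?_⟩
  simpa using h k.rev (Fin.le_rev_iff.mpr hk)

lemma apply_eq_true_of_lt_leadingOnes {j : Fin n} (hj : (j : ℕ) < leadingOnes x) : x j = true :=
  (lt_leadingOnes_iff j).mp hj j le_rfl

lemma apply_eq_false_of_rev_lt_trailingZeros {j : Fin n} (hj : (j.rev : ℕ) < trailingZeros x) :
    x j = false :=
  (lt_trailingZeros_iff j).mp hj j le_rfl

lemma leadingOnes_le_of_apply_eq_false {j : Fin n} (h : x j = false) : leadingOnes x ≤ j :=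
  not_lt.mp fun hj => by simp [apply_eq_true_of_lt_leadingOnes hj] at h

lemma trailingZeros_le_of_apply_eq_true {j : Fin n} (h : x j = true) : trailingZeros x ≤ j.rev :=
  not_lt.mp fun hj => by simp [apply_eq_false_of_rev_lt_trailingZeros hj] at h

lemma le_leadingOnes {a : ℕ} (ha : a ≤ n) (h : ∀ j : Fin n, (j : ℕ) < a → x j = true) :
    a ≤ leadingOnes x := by
  obtain _ | a := a
  · exact Nat.zero_le _
  · exact (lt_leadingOnes_iff ⟨a, ha⟩).mpr fun k hk => h k (Nat.lt_succ_of_le hk)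

lemma le_trailingZeros {b : ℕ} (hb : b ≤ n) (h : ∀ j : Fin n, n - b ≤ j → x j = false) :
    b ≤ trailingZeros x := by
  obtain _ | b := b
  · exact Nat.zero_le _
  · have := (lt_trailingZeros_iff (x := x) ⟨n - (b + 1), by omega⟩).mpr fun k hk =>
      h k (Fin.le_def.mp hk)
    simp only [Fin.val_rev] at this
    omega

lemma leadingOnes_le (x : BitString n) : leadingOnes x ≤ n :=
  (Finset.card_filter_le _ _).trans_eq (Finset.card_fin n)

lemma trailingZeros_le (x : BitString n) : trailingZeros x ≤ n :=
  (Finset.card_filter_le _ _).trans_eq (Finset.card_fin n)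

lemma apply_leadingOnes_eq_false (h : leadingOnes x < n) : x ⟨leadingOnes x, h⟩ = false := by
  by_contra hx
  have := le_leadingOnes (x := x) h fun j hj => by
    rcases Nat.lt_succ_iff_lt_or_eq.mp hj with hj | hj
    · exact apply_eq_true_of_lt_leadingOnes hj
    · rw [show j = ⟨leadingOnes x, h⟩ from Fin.ext hj]
      simpa using hx
  omega

lemma apply_trailingZeros_eq_true (h : trailingZeros x < n) :
    x ⟨n - trailingZeros x - 1, by omega⟩ = true := by
  by_contra hx
  have := le_trailingZeros (x := x) h fun j hj => by
    by_cases hj' : (j : ℕ) = n - trailingZeros x - 1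
    · rw [show j = ⟨n - trailingZeros x - 1, by omega⟩ from Fin.ext hj']
      simpa using hx
    · exact apply_eq_false_of_rev_lt_trailingZeros (by simp only [Fin.val_rev]; omega)
  omega

lemma ldom_le (x : BitString n) : Ldom x ≤ n := by
  by_contra! h
  unfold Ldom at h
  have hLO := leadingOnes_le x
  have hTZ := trailingZeros_le x
  have hj : n - trailingZeros x < n := by omega
  -- otherwise bit `n - TZ x` would be both a leading one and a trailing zero
  have h1 := apply_eq_true_of_lt_leadingOnes (x := x) (j := ⟨_, hj⟩) (by simp; omega)
  have h2 := apply_eq_false_of_rev_lt_trailingZeros (x := x) (j := ⟨_, hj⟩) (by simp; omega)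
  simp [h1] at h2

lemma eq_opt_of_ldom_eq (h : Ldom x = n) : x = opt n (leadingOnes x) := by
  funext j
  by_cases hj : (j : ℕ) < leadingOnes x
  · simp [opt, hj, apply_eq_true_of_lt_leadingOnes hj]
  · have := j.isLt
    unfold Ldom at h
    simp [opt, hj, apply_eq_false_of_rev_lt_trailingZeros (x := x) (j := j) (by simp; omega)]

end BitString

section Dominance

variable {n : ℕ} {x y : BitString n}

lemma lotz_eq_iff :
    LOTZ x = LOTZ y ↔ leadingOnes x = leadingOnes y ∧ trailingZeros x = trailingZeros y := by
  simp [LOTZ, Prod.ext_iff]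

lemma weaklyDominates_lotz_iff :
    weaklyDominates LOTZ y x ↔
      leadingOnes x ≤ leadingOnes y ∧ trailingZeros x ≤ trailingZeros y := by
  simp [weaklyDominates, LOTZ]

lemma dominates_lotz_iff : dominates LOTZ y x ↔
    leadingOnes x ≤ leadingOnes y ∧ trailingZeros x ≤ trailingZeros y ∧ Ldom x < Ldom y := by
  rw [dominates, ← and_assoc, ← weaklyDominates, weaklyDominates_lotz_iff, Ne, lotz_eq_iff, Ldom,
    Ldom]
  omega

lemma exists_flipBit_dominates (h : Ldom x < n) : ∃ i, dominates LOTZ (flipBit x i) x := by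
  have ha : leadingOnes x < n := by unfold Ldom at h; omega
  set i : Fin n := ⟨leadingOnes x, ha⟩
  refine ⟨i, dominates_lotz_iff.mpr ?_⟩
  have hLO : leadingOnes x + 1 ≤ leadingOnes (flipBit x i) := le_leadingOnes ha fun j hj => by
    rcases Nat.lt_succ_iff_lt_or_eq.mp hj with hj | hj
    · rw [flipBit_apply_of_ne x (Fin.ne_of_val_ne hj.ne)]
      exact apply_eq_true_of_lt_leadingOnes hj
    · rw [show j = i from Fin.ext hj, flipBit_apply_self, apply_leadingOnes_eq_false ha]
      rfl
  have hTZ : trailingZeros x ≤ trailingZeros (flipBit x i) :=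
    le_trailingZeros (trailingZeros_le x) fun j hj => by
      rw [flipBit_apply_of_ne x (Fin.ne_of_val_ne (by unfold Ldom at h; simp [i]; omega))]
      exact apply_eq_false_of_rev_lt_trailingZeros (by simp only [Fin.val_rev]; omega)
  unfold Ldom
  omega

lemma paretoOptimal_lotz_iff : paretoOptimal LOTZ x ↔ Ldom x = n := by
  refine ⟨fun hx => ?_, fun h ⟨y, hy⟩ => ?_⟩
  · by_contra hne
    obtain ⟨i, hi⟩ := exists_flipBit_dominates (lt_of_le_of_ne (ldom_le x) hne)
    exact hx ⟨_, hi⟩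
  · have := ldom_le y
    have := (dominates_lotz_iff.mp hy).2.2
    omega

lemma eq_opt_of_paretoOptimal (hx : paretoOptimal LOTZ x) : x = opt n (leadingOnes x) :=
  eq_opt_of_ldom_eq (paretoOptimal_lotz_iff.mp hx)

lemma eq_of_lotz_eq_of_paretoOptimal (hx : paretoOptimal LOTZ x) (h : LOTZ y = LOTZ x) : y = x := by
  obtain ⟨hLO, hTZ⟩ := lotz_eq_iff.mp h
  have hy : Ldom y = n := by rw [Ldom, hLO, hTZ]; exact paretoOptimal_lotz_iff.mp hx
  rw [eq_opt_of_ldom_eq hy, eq_opt_of_paretoOptimal hx, hLO]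

/-- Flipping a bit inside the block of leading ones or of trailing zeros makes `x` worse;
flipping a bit strictly between the two blocks cannot decrease either objective. -/
lemma weaklyDominates_flipBit_or (h : Ldom x < n) (i : Fin n) :
    weaklyDominates LOTZ x (flipBit x i) ∨ weaklyDominates LOTZ (flipBit x i) x := by
  unfold Ldom at h
  have ha : leadingOnes x < n := by omega
  have hb : trailingZeros x < n := by omega
  simp only [weaklyDominates_lotz_iff]
  rcases lt_or_ge (i : ℕ) (leadingOnes x) with hia | hia
  · left
    have hlo := leadingOnes_le_of_apply_eq_false (x := flipBit x i) (j := i)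
      (by rw [flipBit_apply_self, apply_eq_true_of_lt_leadingOnes hia]; rfl)
    have htz := trailingZeros_le_of_apply_eq_true (x := flipBit x i)
      (j := ⟨n - trailingZeros x - 1, by omega⟩) (by
        rw [flipBit_apply_of_ne x (Fin.ne_of_val_ne (by simp; omega))]
        exact apply_trailingZeros_eq_true hb)
    simp only [Fin.val_rev] at htz
    omega
  rcases lt_or_ge (i : ℕ) (n - trailingZeros x) with hib | hib
  · right
    constructor
    · exact le_leadingOnes ha.le fun j hj => by
        rw [flipBit_apply_of_ne x (Fin.ne_of_val_ne (by omega))]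
        exact apply_eq_true_of_lt_leadingOnes hj
    · exact le_trailingZeros hb.le fun j hj => by
        rw [flipBit_apply_of_ne x (Fin.ne_of_val_ne (by omega))]
        exact apply_eq_false_of_rev_lt_trailingZeros (by simp only [Fin.val_rev]; omega)
  · left
    have hlo := leadingOnes_le_of_apply_eq_false (x := flipBit x i) (j := ⟨leadingOnes x, ha⟩) (by
        rw [flipBit_apply_of_ne x (Fin.ne_of_val_ne (by simp; omega))]
        exact apply_leadingOnes_eq_false ha)
    have htz := trailingZeros_le_of_apply_eq_true (x := flipBit x i) (j := i) (by
      rw [flipBit_apply_self,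
        apply_eq_false_of_rev_lt_trailingZeros (x := x) (by simp only [Fin.val_rev]; omega)]
      rfl)
    simp only [Fin.val_rev] at htz hlo
    omega

end Dominance

section Potential

variable {n : ℕ} {P : Finset (BitString n)} {x s : BitString n}

def maxLdom (P : Finset (BitString n)) : ℕ := P.sup Ldom

def paretoMembers (P : Finset (BitString n)) : Finset (BitString n) :=
  P.filter (paretoOptimal LOTZ)

lemma maxLdom_le_maxLdom_updatePop (P : Finset (BitString n)) (y : BitString n) :
    maxLdom P ≤ maxLdom (updatePop LOTZ P y) := by
  unfold updatePop maxLdom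
  split_ifs
  · exact le_rfl
  refine Finset.sup_le fun z hz => ?_
  by_cases hw : weaklyDominates LOTZ y z
  · rw [weaklyDominates_lotz_iff] at hw
    exact le_trans (by unfold Ldom; omega) (Finset.le_sup (Finset.mem_insert_self y _))
  · exact Finset.le_sup (Finset.mem_insert_of_mem (Finset.mem_filter.mpr ⟨hz, hw⟩))

lemma paretoMembers_subset_updatePop (P : Finset (BitString n)) (y : BitString n) :
    paretoMembers P ⊆ paretoMembers (updatePop LOTZ P y) := by
  intro z hz
  obtain ⟨hzP, hz⟩ := Finset.mem_filter.mp hz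
  refine Finset.mem_filter.mpr ⟨?_, hz⟩
  unfold updatePop
  split_ifs
  · exact hzP
  by_cases hw : weaklyDominates LOTZ y z
  -- `y` cannot dominate the optimal `z`, so it has the same objective vector, hence equals `z`
  · have hyz : y = z := eq_of_lotz_eq_of_paretoOptimal hz
      (not_not.mp fun hne => hz ⟨y, hw.1, hw.2, Ne.symm hne⟩)
    exact hyz ▸ Finset.mem_insert_self y _
  · exact Finset.mem_insert_of_mem (Finset.mem_filter.mpr ⟨hzP, hw⟩)

lemma paretoMembers_subset_frontSet (P : Finset (BitString n)) : paretoMembers P ⊆ frontSet n := by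
  intro x hx
  exact Finset.mem_image.mpr ⟨leadingOnes x,
    Finset.mem_range.mpr (Nat.lt_succ_of_le (leadingOnes_le x)),
    (eq_opt_of_paretoOptimal (Finset.mem_filter.mp hx).2).symm⟩

lemma card_paretoMembers_le (P : Finset (BitString n)) : (paretoMembers P).card ≤ n + 1 :=
  calc (paretoMembers P).card ≤ (frontSet n).card :=
        Finset.card_le_card (paretoMembers_subset_frontSet P)
    _ ≤ (Finset.range (n + 1)).card := Finset.card_image_le
    _ = n + 1 := Finset.card_range _

def lotzPotential (P : Finset (BitString n)) : ℕ :=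
  (n - maxLdom P) + (n + 1 - (paretoMembers P).card)

lemma lotzPotential_le (P : Finset (BitString n)) : lotzPotential P ≤ 2 * n + 1 := by
  unfold lotzPotential
  omega

lemma lotzPotential_updatePop_le (P : Finset (BitString n)) (y : BitString n) :
    lotzPotential (updatePop LOTZ P y) ≤ lotzPotential P := by
  have := maxLdom_le_maxLdom_updatePop P y
  have := Finset.card_le_card (paretoMembers_subset_updatePop P y)
  unfold lotzPotential
  omega

lemma exists_lotzPotential_updatePop_lt_of_isGood (hs : isGood LOTZ P s) :
    ∃ i, lotzPotential (updatePop LOTZ P (flipBit s i)) < lotzPotential P := by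
  obtain ⟨-, y, ⟨i, rfl⟩, hy, hnew⟩ := hs
  refine ⟨i, ?_⟩
  have hyQ : flipBit s i ∈ paretoMembers (updatePop LOTZ P (flipBit s i)) :=
    Finset.mem_filter.mpr ⟨mem_updatePop_self fun ⟨z, _, hz⟩ => hy ⟨z, hz⟩, hy⟩
  have hyP : flipBit s i ∉ paretoMembers P := fun h => hnew _ (Finset.mem_filter.mp h).1 rfl
  have hcard := Finset.card_lt_card
    (Finset.ssubset_iff_subset_ne.mpr ⟨paretoMembers_subset_updatePop P _, fun h => hyP (h ▸ hyQ)⟩)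
  have := maxLdom_le_maxLdom_updatePop P (flipBit s i)
  have := card_paretoMembers_le (updatePop LOTZ P (flipBit s i))
  unfold lotzPotential
  omega

lemma exists_lotzPotential_updatePop_singleton_lt (hx : ¬ paretoOptimal LOTZ x) :
    ∃ i, lotzPotential (updatePop LOTZ {x} (flipBit x i)) < lotzPotential {x} := by
  have hlt : Ldom x < n := lt_of_le_of_ne (ldom_le x) (mt paretoOptimal_lotz_iff.mpr hx)
  obtain ⟨i, hd⟩ := exists_flipBit_dominates hlt
  refine ⟨i, ?_⟩
  have hup := updatePop_singleton_of_weaklyDominates (f := LOTZ) ⟨hd.1, hd.2.1⟩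
  have hL := (dominates_lotz_iff.mp hd).2.2
  have hcard := Finset.card_le_card (paretoMembers_subset_updatePop {x} (flipBit x i))
  rw [hup] at hcard ⊢
  have := ldom_le (flipBit x i)
  have := card_paretoMembers_le {flipBit x i}
  simp only [lotzPotential, maxLdom, Finset.sup_singleton]
  omega

end Potential

section Semo

variable {n : ℕ} {P Q : Finset (BitString n)} {s : BitString n}

lemma exists_eq_updatePop_of_mem_support_step (hn : 0 < n) {f : BitString n → ℤ × ℤ}
    {select : Finset (BitString n) → PMF (BitString n)}
    (hQ : Q ∈ (step f select (localMutation hn) P).support) :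
    ∃ s ∈ (select P).support, ∃ i, Q = updatePop f P (flipBit s i) := by
  simp only [step, localMutation, PMF.mem_support_bind_iff, PMF.mem_support_map_iff] at hQ
  obtain ⟨s, hs, _, ⟨i, _, rfl⟩, rfl⟩ := hQ
  exact ⟨s, hs, i, rfl⟩

lemma mul_inv_le_toOuterMeasure_step (hn : 0 < n) {f : BitString n → ℤ × ℤ}
    {select : Finset (BitString n) → PMF (BitString n)} (G : Set (BitString n))
    (A : Set (Finset (BitString n))) {p : ℝ≥0∞} (hG : p ≤ (select P).toOuterMeasure G)
    (hA : ∀ s ∈ G, ∃ i, updatePop f P (flipBit s i) ∈ A) :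
    p * (n : ℝ≥0∞)⁻¹ ≤ (step f select (localMutation hn) P).toOuterMeasure A := by
  have : Nonempty (Fin n) := ⟨⟨0, hn⟩⟩
  have hmut : ∀ s ∈ G,
      (n : ℝ≥0∞)⁻¹ ≤ ((localMutation hn s).map (updatePop f P)).toOuterMeasure A := by
    intro s hs
    obtain ⟨i, hi⟩ := hA s hs
    rw [PMF.toOuterMeasure_map_apply, localMutation, PMF.toOuterMeasure_map_apply]
    calc (n : ℝ≥0∞)⁻¹ = (PMF.uniformOfFintype (Fin n)).toOuterMeasure {i} := by simp
      _ ≤ _ := MeasureTheory.measure_mono (Set.singleton_subset_iff.mpr hi)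
  rw [step, PMF.toOuterMeasure_bind_apply]
  calc p * (n : ℝ≥0∞)⁻¹ ≤ (select P).toOuterMeasure G * (n : ℝ≥0∞)⁻¹ := by gcongr
    _ = ∑' s, G.indicator (select P) s * (n : ℝ≥0∞)⁻¹ := by
        rw [PMF.toOuterMeasure_apply, ENNReal.tsum_mul_right]
    _ ≤ _ := by
        refine ENNReal.tsum_le_tsum fun s => ?_
        rw [Set.indicator_apply]
        split_ifs with hs
        · exact mul_le_mul_right (hmut s hs) _
        · rw [zero_mul]
          exact zero_le

def SemoInvariant (P : Finset (BitString n)) : Prop :=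
  P.Nonempty ∧ mutuallyNonDominated LOTZ P ∧ ((∃ x ∈ P, paretoOptimal LOTZ x) ∨ ∃ x, P = {x})

lemma semoInvariant_singleton (x : BitString n) : SemoInvariant {x} :=
  ⟨Finset.singleton_nonempty x, mutuallyNonDominated_singleton x, Or.inr ⟨x, rfl⟩⟩

lemma SemoInvariant.updatePop_flipBit (hP : SemoInvariant P) (hs : s ∈ P) (i : Fin n) :
    SemoInvariant (updatePop LOTZ P (flipBit s i)) := by
  have hkeep : ∀ x ∈ P, paretoOptimal LOTZ x →
      ∃ y ∈ updatePop LOTZ P (flipBit s i), paretoOptimal LOTZ y := fun x hx hxp =>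
    ⟨x, (Finset.mem_filter.mp (paretoMembers_subset_updatePop P _
      (Finset.mem_filter.mpr ⟨hx, hxp⟩))).1, hxp⟩
  obtain ⟨hne, hmnd, ⟨x, hx, hxp⟩ | ⟨x, rfl⟩⟩ := hP
  · exact ⟨updatePop_nonempty hne _, mutuallyNonDominated_updatePop hmnd _,
      Or.inl (hkeep x hx hxp)⟩
  refine ⟨updatePop_nonempty hne _, mutuallyNonDominated_updatePop hmnd _, ?_⟩
  obtain rfl := Finset.mem_singleton.mp hs
  by_cases hsp : paretoOptimal LOTZ s
  · exact Or.inl (hkeep s hs hsp)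
  have hlt : Ldom s < n := lt_of_le_of_ne (ldom_le s) (mt paretoOptimal_lotz_iff.mpr hsp)
  exact Or.inr ((updatePop_singleton_eq_or (weaklyDominates_flipBit_or hlt i)).elim
    (⟨_, ·⟩) (⟨_, ·⟩))

lemma mul_inv_le_toOuterMeasure_lotzPotential_lt (hn : 0 < n)
    {select : Finset (BitString n) → PMF (BitString n)}
    (hsel : ∀ P : Finset (BitString n), P.Nonempty → ∀ x ∈ (select P).support, x ∈ P)
    {p : ℝ≥0∞} (hp : p ≤ 1) (hP : SemoInvariant P)
    (hgood : (∃ x ∈ P, paretoOptimal LOTZ x) →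
      p ≤ (select P).toOuterMeasure {x | isGood LOTZ P x}) :
    p * (n : ℝ≥0∞)⁻¹ ≤ (step LOTZ select (localMutation hn) P).toOuterMeasure
      {Q | lotzPotential Q < lotzPotential P} := by
  by_cases hpar : ∃ x ∈ P, paretoOptimal LOTZ x
  · exact mul_inv_le_toOuterMeasure_step hn _ _ (hgood hpar)
      fun s hs => exists_lotzPotential_updatePop_lt_of_isGood hs
  obtain ⟨x, rfl⟩ := hP.2.2.resolve_left hpar
  have hx : ¬ paretoOptimal LOTZ x := fun hx => hpar ⟨x, Finset.mem_singleton_self x, hx⟩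
  have hselx : (select {x}).toOuterMeasure {x} = 1 :=
    ((select {x}).toOuterMeasure_apply_eq_one_iff _).mpr fun s hs =>
      Finset.mem_singleton.mp (hsel {x} (Finset.singleton_nonempty x) s hs)
  calc p * (n : ℝ≥0∞)⁻¹ ≤ 1 * (n : ℝ≥0∞)⁻¹ := by gcongr
    _ ≤ _ := mul_inv_le_toOuterMeasure_step hn {x} _ hselx.ge fun s hs => by
      obtain rfl := Set.mem_singleton_iff.mp hs
      exact exists_lotzPotential_updatePop_singleton_lt hx

theorem mul_expectedRuntime_le (hn : 0 < n) {select : Finset (BitString n) → PMF (BitString n)}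
    (hsel : ∀ P : Finset (BitString n), P.Nonempty → ∀ x ∈ (select P).support, x ∈ P)
    (goal : Finset (BitString n) → Prop) {p : ℝ≥0∞} (hp : p ≤ 1)
    (hgood : ∀ P, SemoInvariant P → (∃ x ∈ P, paretoOptimal LOTZ x) → ¬ goal P →
      p ≤ (select P).toOuterMeasure {x | isGood LOTZ P x}) :
    p * expectedRuntime (initDist n) (step LOTZ select (localMutation hn)) goal ≤
      ((2 * n + 1 : ℕ) : ℝ≥0∞) * n := by
  have hdrift := mul_expectedRuntime_le_of_potential (M := 2 * n + 1) (s := p * (n : ℝ≥0∞)⁻¹)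
    (initDist n) (step LOTZ select (localMutation hn)) goal SemoInvariant lotzPotential
    (fun Q hQ => by
      obtain ⟨x, -, rfl⟩ := (PMF.mem_support_map_iff _ _ _).mp hQ
      exact ⟨semoInvariant_singleton x, lotzPotential_le _⟩)
    (fun P hP Q hQ => by
      obtain ⟨s, hs, i, rfl⟩ := exists_eq_updatePop_of_mem_support_step hn hQ
      exact ⟨hP.updatePop_flipBit (hsel P hP.1 s hs) i, lotzPotential_updatePop_le P _⟩)
    (fun P hP hgoal => mul_inv_le_toOuterMeasure_lotzPotential_lt hn hsel hp hP
      fun hpar => hgood P hP hpar hgoal)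
  have hn0 : (n : ℝ≥0∞) ≠ 0 := Nat.cast_ne_zero.mpr hn.ne'
  calc p * expectedRuntime (initDist n) (step LOTZ select (localMutation hn)) goal
      = p * (n : ℝ≥0∞)⁻¹ * expectedRuntime (initDist n) (step LOTZ select (localMutation hn)) goal
          * n := by
        rw [mul_right_comm, mul_assoc p, ENNReal.inv_mul_cancel hn0 (ENNReal.natCast_ne_top n),
          mul_one]
    _ ≤ ((2 * n + 1 : ℕ) : ℝ≥0∞) * n := by gcongr

end Semo

lemma natCast_mul_le_ofReal (n : ℕ) :
    ((2 * n + 1 : ℕ) : ℝ≥0∞) * n ≤ ENNReal.ofReal (3 * n ^ 2) := by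
  rw [show (3 * n ^ 2 : ℝ) = ((3 * n ^ 2 : ℕ) : ℝ) by push_cast; ring, ENNReal.ofReal_natCast,
    ← Nat.cast_mul, Nat.cast_le]
  nlinarith

/-- SEMO on LOTZ (any parent selection supported on the population)
reaches the Pareto front in expected time `O(n²)`; and if afterwards a good individual
is always selected with probability at least `p` while the front is not fully covered,
then the whole Pareto front is covered in expected time `O(n²/p)`. -/
theorem semo_lotz_pgood :
    ∃ C : ℝ, 0 < C ∧ ∀ n : ℕ, ∀ hn : 0 < n,
      ∀ select : Finset (BitString n) → PMF (BitString n),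
        (∀ P : Finset (BitString n), P.Nonempty →
          ∀ x ∈ (select P).support, x ∈ P) →
        (expectedRuntime (initDist n) (step LOTZ select (localMutation hn))
            (fun P => ∃ x ∈ P, paretoOptimal LOTZ x) ≤
          ENNReal.ofReal (C * (n : ℝ) ^ 2)) ∧
        ∀ p : ℝ≥0∞, 0 < p → p ≤ 1 →
          (∀ P : Finset (BitString n), P.Nonempty → mutuallyNonDominated LOTZ P →
            (∃ x ∈ P, paretoOptimal LOTZ x) → ¬ coversFront LOTZ P →
            p ≤ (select P).toOuterMeasure {x | isGood LOTZ P x}) →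
          expectedRuntime (initDist n) (step LOTZ select (localMutation hn))
              (coversFront LOTZ) ≤
            ENNReal.ofReal (C * (n : ℝ) ^ 2) / p := by
  refine ⟨3, by norm_num, fun n hn select hsel => ⟨?_, fun p hp0 hp1 hgood => ?_⟩⟩
  · have h := mul_expectedRuntime_le hn hsel (fun P => ∃ x ∈ P, paretoOptimal LOTZ x) le_rfl
      fun _ _ hpar hgoal => absurd hpar hgoal
    rw [one_mul] at h
    exact h.trans (natCast_mul_le_ofReal n)
  · rw [ENNReal.le_div_iff_mul_le (Or.inl hp0.ne') (Or.inr ENNReal.ofReal_ne_top), mul_comm]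
    exact (mul_expectedRuntime_le hn hsel (coversFront LOTZ) hp1
      fun P hP hpar hgoal => hgood P hP.1 hP.2.1 hpar hgoal).trans (natCast_mul_le_ofReal n)

end EMO
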